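/- Fix masses m, M with 2M > m > 0. There exists a constant c > 0, depending only on m and M, with the following property. Let s₁, s₂ ∈ {+1,−1}, let k, k₁, k₂ be nonnegative integers and j, j₁, j₂ integers, and let φ, u₁, u₂ : ℝ × ℝ³ → ℂ be Schwartz functions whose space-time Fourier transforms satisfy: supp φ̂ ⊆ {(τ,ξ) : |ξ| ≤ 2^{k+2}, (k ≥ 1 ⟹ |ξ| ≥ 2^{k−2}), and 2^{j−2} ≤ |τ + ⟨ξ⟩_m| ≤ 2^{j+2}}, and for i = 1,2, supp ûᵢ ⊆ {(τ,ξ) : |ξ| ≤ 2^{kᵢ+2}, (kᵢ ≥ 1 ⟹ |ξ| ≥ 2^{kᵢ−2}), and 2^{jᵢ−2} ≤ |τ + sᵢ⟨ξ⟩_M| ≤ 2^{jᵢ+2}}. Assume either (s₁,s₂) = (+1,−1), or ((s₁,s₂) = (−1,+1) and k ≤ min(k₁,k₂) − c). If max(j, j₁, j₂) ≤ max(k, k₁, k₂) − c, then ∫_{ℝ×ℝ³} φ(t,x) u₁(t,x) \overline{u₂(t,x)} dt dx = 0. -/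

import Mathlib

/-!
By Fourier inversion and Fubini, `∫ φ u₁ ū₂ = ∫∫ φ̂(ζ) û₁(η) conj (û₂(ζ + η))`, so the integral
vanishes unless some `ζ ∈ supp φ̂`, `η ∈ supp û₁` have `ζ + η ∈ supp û₂`. For such a triple, with
`ξ, ξ'` the spatial parts of `ζ, η`, the three modulation bounds force the resonance function
`⟨ξ⟩_m + s₁⟨ξ'⟩_M - s₂⟨ξ + ξ'⟩_M` to be `O(2^{max j}) = O(2^{K - c})`, `K = max(k, k₁, k₂)`.
For `(s₁, s₂) = (+, -)` it is a sum of three brackets, hence at least `min(m, M, 1/4) 2^K`.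
For `(-, +)` it is `⟨ξ⟩_m - (⟨ξ'⟩_M + ⟨ξ + ξ'⟩_M)`; as `k ≪ k₁, k₂`, the first term is at most
`m + 2^{K - c + 2}`, while the bracket sum is at least `max(2M, 2^{K - 2})`, and `2M > m` leaves
no room for both.
-/

noncomputable section

open MeasureTheory Complex
open scoped RealInnerProductSpace

/-- Spacetime `ℝ × ℝ³`, realized as `ℝ⁴`, with coordinate `0` playing the role of the
time variable `t` (resp. the frequency `τ`) and coordinates `1,2,3` the space variables. -/
abbrev SpaceTime := EuclideanSpace ℝ (Fin 4)

/-- The spatial part `ξ ∈ ℝ³` of a spacetime frequency `ζ = (τ, ξ)`. -/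
def spatial (ζ : SpaceTime) : EuclideanSpace ℝ (Fin 3) := WithLp.toLp 2 (fun i : Fin 3 => ζ i.succ)

/-- The space-time Fourier transform `v̂(ζ) = ∫ e^{−i⟨z,ζ⟫} v(z) dz` (so that
`v̂(τ,ξ) = ∫ e^{−i(tτ+x·ξ)} v(t,x) dt dx`). -/
def spacetimeFT (v : SpaceTime → ℂ) (ζ : SpaceTime) : ℂ :=
  ∫ z : SpaceTime, Complex.exp (-(Complex.I * ((⟪z, ζ⟫ : ℝ) : ℂ))) * v z

/-- The Japanese bracket `⟨ξ⟩_a := √(|ξ|² + a²)`. -/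
def jbracket (a : ℝ) (ξ : EuclideanSpace ℝ (Fin 3)) : ℝ :=
  Real.sqrt (‖ξ‖ ^ 2 + a ^ 2)

/-- The region `{(τ,ξ) : |ξ| ≤ 2^{k+2}, (k ≥ 1 ⟹ |ξ| ≥ 2^{k−2}),
2^{j−2} ≤ |τ + sgn·⟨ξ⟩_a| ≤ 2^{j+2}}` of spacetime frequencies with spatial frequency
comparable to `2^k` and modulation (relative to the mass-`a`, sign-`sgn` characteristic
hypersurface) comparable to `2^j`. -/
def kgRegion (a sgn : ℝ) (k : ℕ) (j : ℤ) : Set SpaceTime :=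
  {ζ | ‖spatial ζ‖ ≤ 2 ^ (k + 2) ∧
    (1 ≤ k → (2 : ℝ) ^ ((k : ℤ) - 2) ≤ ‖spatial ζ‖) ∧
    (2 : ℝ) ^ (j - 2) ≤ |ζ 0 + sgn * jbracket a (spatial ζ)| ∧
    |ζ 0 + sgn * jbracket a (spatial ζ)| ≤ (2 : ℝ) ^ (j + 2)}


open scoped FourierTransform

section Fourier

variable {V : Type*} [NormedAddCommGroup V] [InnerProductSpace ℝ V] [FiniteDimensional ℝ V]
  [MeasurableSpace V] [BorelSpace V]

theorem integral_fourierInv_mul_eq_of_integrable {f g : V → ℂ} (hf : Integrable f)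
    (hg : Integrable g) : ∫ ξ, 𝓕⁻ f ξ * g ξ = ∫ x, f x * 𝓕⁻ g x := by
  have hL : (-innerₗ V).flip = -innerₗ V := by
    ext x y; simp [real_inner_comm]
  have := VectorFourier.integral_fourierIntegral_smul_eq_flip (L := -innerₗ V)
    Real.continuous_fourierChar continuous_inner.neg hf hg
  rw [hL] at this
  exact this

theorem fourierInv_fourierChar_smul_conj (f : V → ℂ) (ζ η : V) :
    𝓕⁻ (fun z ↦ 𝐞 ⟪z, ζ⟫ • starRingEnd ℂ (f z)) η = starRingEnd ℂ (𝓕 f (ζ + η)) := by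
  rw [Real.fourierInv_eq, Real.fourier_eq, ← integral_conj]
  congr 1 with z
  simp only [Circle.smul_def, smul_eq_mul, map_mul, ← Circle.coe_inv_eq_conj,
    ← AddChar.map_neg_eq_inv, neg_neg, inner_add_right, AddChar.map_add_eq_mul, Circle.coe_mul]
  ring

theorem SchwartzMap.integrable_fourier_coe (f : SchwartzMap V ℂ) : Integrable (𝓕 (f : V → ℂ)) :=
  fourier_coe f ▸ (𝓕 f).integrable

theorem SchwartzMap.fourierInv_fourier_coe (f : SchwartzMap V ℂ) : 𝓕⁻ (𝓕 (f : V → ℂ)) = f :=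
  f.continuous.fourierInv_fourier_eq f.integrable f.integrable_fourier_coe

theorem integral_mul_mul_conj_eq (φ u₁ u₂ : SchwartzMap V ℂ) :
    ∫ z, φ z * u₁ z * starRingEnd ℂ (u₂ z) =
      ∫ ζ, 𝓕 (φ : V → ℂ) ζ * ∫ η, 𝓕 (u₁ : V → ℂ) η * starRingEnd ℂ (𝓕 (u₂ : V → ℂ) (ζ + η)) := by
  have hu₂ : Integrable (fun z ↦ starRingEnd ℂ (u₂ z)) :=
    Complex.conjCLE.toContinuousLinearMap.integrable_comp u₂.integrable
  have hmod (ζ : V) : Integrable (fun z ↦ 𝐞 ⟪z, ζ⟫ • starRingEnd ℂ (u₂ z)) := by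
    simpa using (Real.fourierIntegral_convergent_iff (-ζ)).2 hu₂
  have hu : Integrable (fun z ↦ u₁ z * starRingEnd ℂ (u₂ z)) :=
    hu₂.bdd_mul u₁.continuous.aestronglyMeasurable
      (ae_of_all _ (SchwartzMap.norm_le_seminorm ℝ u₁))
  calc ∫ z, φ z * u₁ z * starRingEnd ℂ (u₂ z)
      = ∫ z, 𝓕⁻ (𝓕 (φ : V → ℂ)) z * (u₁ z * starRingEnd ℂ (u₂ z)) := by
        simp_rw [φ.fourierInv_fourier_coe, mul_assoc]
    _ = ∫ ζ, 𝓕 (φ : V → ℂ) ζ * 𝓕⁻ (fun z ↦ u₁ z * starRingEnd ℂ (u₂ z)) ζ :=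
        integral_fourierInv_mul_eq_of_integrable φ.integrable_fourier_coe hu
    _ = _ := by
        congr 1 with ζ
        congr 1
        calc 𝓕⁻ (fun z ↦ u₁ z * starRingEnd ℂ (u₂ z)) ζ
            = ∫ z, 𝓕⁻ (𝓕 (u₁ : V → ℂ)) z * (𝐞 ⟪z, ζ⟫ • starRingEnd ℂ (u₂ z)) := by
              rw [u₁.fourierInv_fourier_coe, Real.fourierInv_eq]
              congr 1 with z
              simp only [Circle.smul_def, smul_eq_mul]
              ring
          _ = _ := by
              rw [integral_fourierInv_mul_eq_of_integrable u₁.integrable_fourier_coe (hmod ζ)]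
              simp_rw [fourierInv_fourierChar_smul_conj]

theorem integral_mul_mul_conj_eq_zero (φ u₁ u₂ : SchwartzMap V ℂ)
    (h : ∀ ζ η, 𝓕 (φ : V → ℂ) ζ ≠ 0 → 𝓕 (u₁ : V → ℂ) η ≠ 0 → 𝓕 (u₂ : V → ℂ) (ζ + η) = 0) :
    ∫ z, φ z * u₁ z * starRingEnd ℂ (u₂ z) = 0 := by
  rw [integral_mul_mul_conj_eq]
  refine integral_eq_zero_of_ae (ae_of_all _ fun ζ ↦ ?_)
  dsimp only [Pi.zero_apply]
  by_cases h₀ : 𝓕 (φ : V → ℂ) ζ = 0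
  · simp [h₀]
  rw [integral_eq_zero_of_ae (ae_of_all _ fun η ↦ ?_), mul_zero]
  dsimp only [Pi.zero_apply]
  by_cases h₁ : 𝓕 (u₁ : V → ℂ) η = 0
  · simp [h₁]
  · simp [h ζ η h₀ h₁]

end Fourier

theorem fourier_eq_spacetimeFT (v : SpaceTime → ℂ) (ζ : SpaceTime) :
    𝓕 v ζ = spacetimeFT v ((2 * Real.pi) • ζ) := by
  rw [Real.fourier_eq', spacetimeFT]
  congr 1 with z
  rw [smul_eq_mul, real_inner_smul_right]
  push_cast
  ring_nf

theorem two_pi_smul_mem_of_fourier_ne_zero {v : SpaceTime → ℂ} {S : Set SpaceTime}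
    (h : Function.support (spacetimeFT v) ⊆ S) {ζ : SpaceTime} (hζ : 𝓕 v ζ ≠ 0) :
    (2 * Real.pi) • ζ ∈ S :=
  h (by rwa [Function.mem_support, ← fourier_eq_spacetimeFT])

theorem jbracket_nonneg (a : ℝ) (ξ : EuclideanSpace ℝ (Fin 3)) : 0 ≤ jbracket a ξ :=
  Real.sqrt_nonneg _

theorem le_jbracket (a : ℝ) (ξ : EuclideanSpace ℝ (Fin 3)) : a ≤ jbracket a ξ :=
  (le_abs_self a).trans (Real.abs_le_sqrt (by nlinarith [sq_nonneg ‖ξ‖]))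

theorem norm_le_jbracket (a : ℝ) (ξ : EuclideanSpace ℝ (Fin 3)) : ‖ξ‖ ≤ jbracket a ξ :=
  (le_abs_self _).trans (Real.abs_le_sqrt (by nlinarith [sq_nonneg a]))

theorem jbracket_le_norm_add {a : ℝ} (ha : 0 ≤ a) (ξ : EuclideanSpace ℝ (Fin 3)) :
    jbracket a ξ ≤ ‖ξ‖ + a :=
  Real.sqrt_le_iff.2 ⟨by positivity, by nlinarith [norm_nonneg ξ]⟩

section kgRegion

variable {a s : ℝ} {k : ℕ} {j : ℤ} {ζ : SpaceTime}

theorem norm_spatial_le_of_mem_kgRegion (h : ζ ∈ kgRegion a s k j) :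
    ‖spatial ζ‖ ≤ 2 ^ ((k : ℤ) + 2) := by
  exact_mod_cast h.1

theorem two_zpow_sub_two_le_jbracket_of_mem_kgRegion (h : ζ ∈ kgRegion a s k j) (hk : 1 ≤ k) :
    (2 : ℝ) ^ ((k : ℤ) - 2) ≤ jbracket a (spatial ζ) :=
  (h.2.1 hk).trans (norm_le_jbracket a _)

theorem mul_two_zpow_le_jbracket_of_mem_kgRegion {δ : ℝ} (hδa : δ ≤ a) (hδ : δ ≤ 1 / 4)
    (h : ζ ∈ kgRegion a s k j) : δ * 2 ^ (k : ℤ) ≤ jbracket a (spatial ζ) := by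
  rcases Nat.eq_zero_or_pos k with rfl | hk
  · simpa using hδa.trans (le_jbracket a _)
  · refine le_trans ?_ (two_zpow_sub_two_le_jbracket_of_mem_kgRegion h hk)
    calc δ * 2 ^ (k : ℤ) ≤ 1 / 4 * 2 ^ (k : ℤ) := by gcongr
      _ = 2 ^ ((k : ℤ) - 2) := by rw [zpow_sub₀ two_ne_zero]; norm_num; ring

end kgRegion

theorem abs_resonance_le {a₀ a₁ a₂ s₀ s₁ s₂ : ℝ} {k₀ k₁ k₂ : ℕ} {j₀ j₁ j₂ L : ℤ}
    {ζ η : SpaceTime} (hζ : ζ ∈ kgRegion a₀ s₀ k₀ j₀) (hη : η ∈ kgRegion a₁ s₁ k₁ j₁)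
    (hζη : ζ + η ∈ kgRegion a₂ s₂ k₂ j₂) (h₀ : j₀ ≤ L) (h₁ : j₁ ≤ L) (h₂ : j₂ ≤ L) :
    |s₀ * jbracket a₀ (spatial ζ) + s₁ * jbracket a₁ (spatial η) -
      s₂ * jbracket a₂ (spatial (ζ + η))| ≤ 2 ^ (L + 4) := by
  have hmod {a s : ℝ} {k : ℕ} {j : ℤ} {ζ : SpaceTime} (h : ζ ∈ kgRegion a s k j) (hj : j ≤ L) :
      |ζ 0 + s * jbracket a (spatial ζ)| ≤ 2 ^ (L + 2) :=
    h.2.2.2.trans (zpow_le_zpow_right₀ one_le_two (by omega))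
  have h4 : (2 : ℝ) ^ (L + 4) = 4 * 2 ^ (L + 2) := by
    rw [show L + 4 = 2 + (L + 2) by ring, zpow_add₀ two_ne_zero]; norm_num
  calc _ = |(ζ 0 + s₀ * jbracket a₀ (spatial ζ)) + (η 0 + s₁ * jbracket a₁ (spatial η)) +
          -((ζ + η) 0 + s₂ * jbracket a₂ (spatial (ζ + η)))| := by
        rw [show (ζ + η) 0 = ζ 0 + η 0 from rfl]; ring_nf
    _ ≤ _ := abs_add_three _ _ _
    _ ≤ 2 ^ (L + 4) := by
        rw [abs_neg, h4]
        linarith [hmod hζ h₀, hmod hη h₁, hmod hζη h₂, zpow_pos (two_pos (α := ℝ)) (L + 2)]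

theorem exists_two_zpow_sub_lt {ε : ℝ} (hε : 0 < ε) (N : ℤ) :
    ∃ n : ℕ, 1 ≤ n ∧ (2 : ℝ) ^ (N - n) < ε := by
  obtain ⟨n, hn⟩ := pow_unbounded_of_one_lt (2 ^ N / ε) one_lt_two
  refine ⟨n + 1, by omega, ?_⟩
  rw [zpow_sub₀ two_ne_zero, div_lt_iff₀ (by positivity), zpow_natCast]
  rw [div_lt_iff₀ hε] at hn
  have : (2 : ℝ) ^ n ≤ 2 ^ (n + 1) := pow_le_pow_right₀ one_le_two n.le_succ
  nlinarith

section resonance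

variable {m M : ℝ} {k k₁ k₂ n : ℕ} {j j₁ j₂ : ℤ} {ζ η : SpaceTime}

theorem add_notMem_kgRegion_of_pos_neg
    (hsmall : (2 : ℝ) ^ (4 - (n : ℤ)) < min (min m M) (1 / 4))
    (hJ : max j (max j₁ j₂) + n ≤ max k (max k₁ k₂))
    (hζ : ζ ∈ kgRegion m 1 k j) (hη : η ∈ kgRegion M 1 k₁ j₁) :
    ζ + η ∉ kgRegion M (-1) k₂ j₂ := by
  intro hζη
  set K : ℕ := max k (max k₁ k₂)
  set δ := min (min m M) (1 / 4)
  have hres := abs_resonance_le hζ hη hζη (L := K - n) (by omega) (by omega) (by omega)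
  have h₀ := mul_two_zpow_le_jbracket_of_mem_kgRegion (δ := δ) (by simp [δ]) (by simp [δ]) hζ
  have h₁ := mul_two_zpow_le_jbracket_of_mem_kgRegion (δ := δ) (by simp [δ]) (by simp [δ]) hη
  have h₂ := mul_two_zpow_le_jbracket_of_mem_kgRegion (δ := δ) (by simp [δ]) (by simp [δ]) hζη
  have := jbracket_nonneg m (spatial ζ)
  have := jbracket_nonneg M (spatial η)
  have := jbracket_nonneg M (spatial (ζ + η))
  have hlow : δ * 2 ^ (K : ℤ) ≤
      jbracket m (spatial ζ) + jbracket M (spatial η) + jbracket M (spatial (ζ + η)) := by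
    rcases (by omega : K = k ∨ K = k₁ ∨ K = k₂) with h | h | h <;> rw [h] <;> linarith
  have hup : (2 : ℝ) ^ ((K : ℤ) - n + 4) < δ * 2 ^ (K : ℤ) := by
    rw [show (K : ℤ) - n + 4 = (4 - n) + K by ring, zpow_add₀ two_ne_zero]
    exact mul_lt_mul_of_pos_right hsmall (by positivity)
  rw [abs_le] at hres
  linarith [hres.2]

theorem add_notMem_kgRegion_of_neg_pos (hm : 0 < m) (hn : 1 ≤ n)
    (hρ : (2 : ℝ) ^ (7 - (n : ℤ)) ≤ 1 / 2)
    (hρm : 2 * m * (2 : ℝ) ^ (7 - (n : ℤ)) < 2 * M - m)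
    (hk₁ : k + n ≤ k₁) (hk₂ : k + n ≤ k₂)
    (hJ : max j (max j₁ j₂) + n ≤ max k (max k₁ k₂))
    (hζ : ζ ∈ kgRegion m 1 k j) (hη : η ∈ kgRegion M (-1) k₁ j₁) :
    ζ + η ∉ kgRegion M 1 k₂ j₂ := by
  intro hζη
  set K : ℕ := max k₁ k₂
  set P : ℝ := 2 ^ ((K : ℤ) - 2)
  set ρ : ℝ := 2 ^ (7 - (n : ℤ))
  have hres := abs_resonance_le hζ hη hζη (L := K - n) (by omega) (by omega) (by omega)
  set x := jbracket m (spatial ζ)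
  set y := jbracket M (spatial η)
  set z := jbracket M (spatial (ζ + η))
  have hP : P ≤ y + z := by
    have := jbracket_nonneg M (spatial η)
    have := jbracket_nonneg M (spatial (ζ + η))
    rcases max_choice k₁ k₂ with h | h
    · have := two_zpow_sub_two_le_jbracket_of_mem_kgRegion hη (by omega)
      simp only [P, K, h] at this ⊢; linarith
    · have := two_zpow_sub_two_le_jbracket_of_mem_kgRegion hζη (by omega)
      simp only [P, K, h] at this ⊢; linarith
  have hM : 2 * M ≤ y + z := by linarith [le_jbracket M (spatial η), le_jbracket M (spatial (ζ + η))]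
  have hx : x ≤ 2 ^ ((K : ℤ) - n + 2) + m := by
    have := (norm_spatial_le_of_mem_kgRegion hζ).trans
      (zpow_le_zpow_right₀ one_le_two (by omega : (k : ℤ) + 2 ≤ K - n + 2))
    linarith [jbracket_le_norm_add hm.le (spatial ζ)]
  have hyz : y + z ≤ m + P * ρ := by
    have e₂ : P * ρ = 2 ^ ((K : ℤ) - n + 2) * 8 := by
      simp only [P, ρ]
      rw [← zpow_add₀ two_ne_zero, show (K : ℤ) - 2 + (7 - n) = (K - n + 2) + 3 by ring,
        zpow_add₀ two_ne_zero]
      norm_num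
    have e₄ : (2 : ℝ) ^ ((K : ℤ) - n + 4) = 2 ^ ((K : ℤ) - n + 2) * 4 := by
      rw [show (K : ℤ) - n + 4 = (K - n + 2) + 2 by ring, zpow_add₀ two_ne_zero]
      norm_num
    have : (0 : ℝ) < 2 ^ ((K : ℤ) - n + 2) := by positivity
    rw [abs_le] at hres
    linarith [hres.1]
  have hP2m : P ≤ 2 * m := by
    have : P * ρ ≤ P * (1 / 2) := mul_le_mul_of_nonneg_left hρ (by positivity)
    linarith
  have : P * ρ ≤ 2 * m * ρ := mul_le_mul_of_nonneg_right hP2m (by positivity)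
  linarith

end resonance

/-- Case 1 of the modulation lemma: with signs `(s₁,s₂) = (+,−)`, or `(s₁,s₂) = (−,+)` and
`k ≪ min(k₁,k₂)`, if all modulations are far below `2^{max(k,k₁,k₂)}` then the trilinear
integral vanishes. -/
theorem trilinear_vanishing_case1 (m M : ℝ) (hm : 0 < m) (hmM : m < 2 * M) :
    ∃ c > (0 : ℝ), ∀ s₁ s₂ : ℝ, (s₁ = 1 ∨ s₁ = -1) → (s₂ = 1 ∨ s₂ = -1) →
      ∀ k k₁ k₂ : ℕ, ∀ j j₁ j₂ : ℤ,
        ∀ φ u₁ u₂ : SchwartzMap SpaceTime ℂ,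
          Function.support (spacetimeFT ⇑φ) ⊆ kgRegion m 1 k j →
          Function.support (spacetimeFT ⇑u₁) ⊆ kgRegion M s₁ k₁ j₁ →
          Function.support (spacetimeFT ⇑u₂) ⊆ kgRegion M s₂ k₂ j₂ →
          ((s₁ = 1 ∧ s₂ = -1) ∨
            (s₁ = -1 ∧ s₂ = 1 ∧ (k : ℝ) ≤ min (k₁ : ℝ) (k₂ : ℝ) - c)) →
          ((max j (max j₁ j₂) : ℤ) : ℝ) ≤ max (k : ℝ) (max (k₁ : ℝ) (k₂ : ℝ)) - c →
          ∫ z : SpaceTime, φ z * u₁ z * (starRingEnd ℂ) (u₂ z) = 0 := by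
  -- `c` is taken to be a natural number `n`, so that all dyadic comparisons are between
  -- integer powers of `2`.
  have hM : 0 < M := by linarith
  obtain ⟨n, hn, hε₁, hε₂⟩ : ∃ n : ℕ, 1 ≤ n ∧ (2 : ℝ) ^ (7 - (n : ℤ)) < min (min m M) (1 / 4) ∧
      (2 : ℝ) ^ (7 - (n : ℤ)) < (2 * M - m) / (2 * m) := by
    simpa only [lt_min_iff] using exists_two_zpow_sub_lt
      (ε := min (min (min m M) (1 / 4)) ((2 * M - m) / (2 * m))) (by positivity) 7
  refine ⟨n, by exact_mod_cast hn, ?_⟩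
  intro s₁ s₂ _ _ k k₁ k₂ j j₁ j₂ φ u₁ u₂ hφ hu₁ hu₂ hcase hJ
  have hJ' : max j (max j₁ j₂) + n ≤ max k (max k₁ k₂) := by
    have : ((max j (max j₁ j₂) + n : ℤ) : ℝ) ≤ ((max k (max k₁ k₂) : ℕ) : ℝ) := by
      push_cast at hJ ⊢; linarith
    exact_mod_cast this
  refine integral_mul_mul_conj_eq_zero φ u₁ u₂ fun ζ η hζ hη ↦ ?_
  by_contra hζη
  have hζ' := two_pi_smul_mem_of_fourier_ne_zero hφ hζ
  have hη' := two_pi_smul_mem_of_fourier_ne_zero hu₁ hη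
  have hζη' := smul_add (2 * Real.pi) ζ η ▸ two_pi_smul_mem_of_fourier_ne_zero hu₂ hζη
  rcases hcase with ⟨rfl, rfl⟩ | ⟨rfl, rfl, hk⟩
  · refine add_notMem_kgRegion_of_pos_neg ?_ hJ' hζ' hη' hζη'
    exact (zpow_le_zpow_right₀ one_le_two (by omega)).trans_lt hε₁
  · rw [le_sub_iff_add_le, le_min_iff] at hk
    refine add_notMem_kgRegion_of_neg_pos hm hn ?_ ?_ (by exact_mod_cast hk.1)
      (by exact_mod_cast hk.2) hJ' hζ' hη' hζη'
    · linarith [min_le_right (min m M) (1 / 4 : ℝ)]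
    · rw [lt_div_iff₀ (by positivity)] at hε₂
      linarith
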